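/- arXiv:2011.08597 — 3 statements merged into one kernel-verified Lean document; each statement's English description precedes it below -/
import Mathlib

section
/- Let (M,d) be a metric space, p ∈ M, τ > 0, and γ:[0,τ]→M a geodesic issuing from p with speed v = d(p,γ(τ))/τ. Let α ∈ ℝ and f : M → ℝ be such that the map t ↦ f(γ(t)) − (α/2)·d(p,γ(t))² is concave on [0,τ], and assume f is λ-Lipschitz on some open ball centered at p, for some λ ≥ 0. Then the difference quotient (f(γ(t)) − f(p))/t converges as t → 0⁺, its limit equals sup over t ∈ (0,τ] of { (f(γ(t)) − f(p))/t − (α t/2)·v² }, and in particular this supremum is finite. -/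
open Filter Set

/-- For a geodesic `γ : [0,τ] → M` issuing from `p` with speed
`v = d(p, γ τ)/τ`, if `t ↦ f (γ t) - (α/2) d(p, γ t)^2` is concave on `[0,τ]` and `f`
is `λ`-Lipschitz on some open ball around `p`, then the difference quotient
`(f (γ t) - f p)/t` converges as `t → 0⁺`, and its limit is the (finite) supremum over
`t ∈ (0,τ]` of `(f (γ t) - f p)/t - (α t/2) v²`. -/
theorem diff_quotient_tendsto_sup
    {M : Type*} [MetricSpace M] (p : M) (τ : ℝ) (hτ : 0 < τ)
    (γ : ℝ → M) (hγcont : ContinuousOn γ (Set.Icc 0 τ)) (hγ0 : γ 0 = p)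
    (hgeo : ∀ s ∈ Set.Icc (0:ℝ) τ, ∀ t ∈ Set.Icc (0:ℝ) τ,
      dist (γ s) (γ t) = (|s - t| / τ) * dist (γ 0) (γ τ))
    (α : ℝ) (f : M → ℝ)
    (hconc : ConcaveOn ℝ (Set.Icc 0 τ)
      (fun t : ℝ => f (γ t) - α / 2 * (dist p (γ t)) ^ 2))
    (lam : ℝ) (hlam : 0 ≤ lam)
    (hLip : ∃ r > 0, ∀ x ∈ Metric.ball p r, ∀ y ∈ Metric.ball p r,
      |f x - f y| ≤ lam * dist x y) :
    ∃ L : ℝ,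
      Tendsto (fun t : ℝ => (f (γ t) - f p) / t) (nhdsWithin 0 (Set.Ioi 0)) (nhds L) ∧
      IsLUB ((fun t : ℝ =>
        (f (γ t) - f p) / t - α * t / 2 * (dist p (γ τ) / τ) ^ 2) '' Set.Ioc 0 τ) L := by
  set v : ℝ := dist p (γ τ) / τ with hv
  have hvnn : 0 ≤ v := div_nonneg dist_nonneg hτ.le
  set F : ℝ → ℝ := fun t : ℝ =>
      (f (γ t) - f p) / t - α * t / 2 * (dist p (γ τ) / τ) ^ 2 with hF
  -- distance along geodesic
  have hd : ∀ t ∈ Icc (0:ℝ) τ, dist p (γ t) = v * t := by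
    intro t ht
    have := hgeo t ht 0 ⟨le_refl 0, hτ.le⟩
    rw [hγ0] at this
    rw [dist_comm, this, abs_of_nonneg (by linarith [ht.1] : (0:ℝ) ≤ t - 0), hv]
    ring
  -- antitonicity of F on Ioc 0 τ
  have hanti : ∀ s ∈ Ioc (0:ℝ) τ, ∀ t ∈ Ioc (0:ℝ) τ, s ≤ t → F t ≤ F s := by
    intro s hs t ht hst
    rcases eq_or_lt_of_le hst with rfl | hlt
    · exact le_rfl
    have h0 : (0:ℝ) ∈ Icc (0:ℝ) τ := ⟨le_refl 0, hτ.le⟩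
    have hsI : s ∈ Icc (0:ℝ) τ := ⟨hs.1.le, hs.2⟩
    have htI : t ∈ Icc (0:ℝ) τ := ⟨(hs.1.trans hlt).le, ht.2⟩
    have key := hconc.slope_anti_adjacent h0 htI hs.1 hlt
    simp only [sub_zero] at key
    rw [hd s hsI, hd t htI, hγ0, dist_self] at key
    have key2 : ((f (γ t) - α / 2 * (v * t) ^ 2) - (f (γ s) - α / 2 * (v * s) ^ 2)) * s ≤
        ((f (γ s) - α / 2 * (v * s) ^ 2) - (f p - α / 2 * 0 ^ 2)) * (t - s) :=
      (div_le_div_iff₀ (by linarith) hs.1).mp key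
    have hts : (0:ℝ) < t * s := mul_pos (hs.1.trans hlt) hs.1
    have hs' : s ≠ 0 := hs.1.ne'
    have ht' : t ≠ 0 := (hs.1.trans hlt).ne'
    have eF : F t - F s =
        ((f (γ t) - f p) * s - (f (γ s) - f p) * t - α / 2 * v ^ 2 * s * t * (t - s)) / (t * s) := by
      rw [hF, hv, ← hv]
      field_simp
      ring
    have hnum : (f (γ t) - f p) * s - (f (γ s) - f p) * t - α / 2 * v ^ 2 * s * t * (t - s) ≤ 0 := by
      nlinarith [key2]
    have := div_nonpos_of_nonpos_of_nonneg hnum hts.le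
    linarith [eF ▸ this]
  -- bounded above
  obtain ⟨r, hr, hL⟩ := hLip
  set C : ℝ := lam * v + |α| * τ / 2 * v ^ 2 with hC
  set t0 : ℝ := min τ (r / (v + 1)) with ht0
  have ht0pos : 0 < t0 := lt_min hτ (div_pos hr (by linarith))
  have ht0τ : t0 ≤ τ := min_le_left _ _
  have hsmall : ∀ t ∈ Ioc (0:ℝ) t0, F t ≤ C := by
    rintro t ⟨ht1, ht2⟩
    have htτ : t ∈ Icc (0:ℝ) τ := ⟨ht1.le, ht2.trans ht0τ⟩
    have hdist : dist p (γ t) = v * t := hd t htτ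
    have hvt : v * t < r := by
      have h1 : v * t ≤ v * (r / (v + 1)) :=
        mul_le_mul_of_nonneg_left (ht2.trans (min_le_right _ _)) hvnn
      have h2 : v * (r / (v + 1)) < r := by
        rw [mul_div_assoc']
        rw [div_lt_iff₀ (by linarith : (0:ℝ) < v + 1)]
        nlinarith
      linarith
    have hball : γ t ∈ Metric.ball p r := by
      rw [Metric.mem_ball, dist_comm, hdist]; exact hvt
    have habs := hL (γ t) hball p (Metric.mem_ball_self hr)
    rw [dist_comm, hdist] at habs
    have h1 : f (γ t) - f p ≤ lam * (v * t) := (abs_le.mp habs).2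
    have h4 : (f (γ t) - f p) / t ≤ lam * v := by
      rw [div_le_iff₀ ht1]; nlinarith
    have h2 : -α ≤ |α| := neg_le_abs α
    have h3 : (0:ℝ) ≤ v ^ 2 := sq_nonneg v
    have h5 : -(α * t / 2 * v ^ 2) ≤ |α| * τ / 2 * v ^ 2 := by
      nlinarith [mul_nonneg ht1.le h3, mul_nonneg (abs_nonneg α) h3,
        mul_nonneg (mul_nonneg (abs_nonneg α) (sub_nonneg.mpr htτ.2)) h3]
    have : F t = (f (γ t) - f p) / t - α * t / 2 * v ^ 2 := by rw [hF, hv]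
    rw [this, hC]; linarith
  have hbdd : ∀ t ∈ Ioc (0:ℝ) τ, F t ≤ C := by
    intro t ht
    by_cases h : t ≤ t0
    · exact hsmall t ⟨ht.1, h⟩
    · exact le_trans (hanti t0 ⟨ht0pos, ht0τ⟩ t ht (le_of_not_ge h))
        (hsmall t0 ⟨ht0pos, le_rfl⟩)
  have hBdd : BddAbove (F '' Ioo 0 τ) := by
    refine ⟨C, ?_⟩
    rintro x ⟨t, ht, rfl⟩
    exact hbdd t ⟨ht.1, ht.2.le⟩
  have hne : (Ioo (0:ℝ) τ).Nonempty := ⟨τ / 2, by constructor <;> linarith⟩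
  have hAnti : AntitoneOn F (Ioo 0 τ) := fun s hs t ht hst =>
    hanti s ⟨hs.1, hs.2.le⟩ t ⟨ht.1, ht.2.le⟩ hst
  have hT : Tendsto F (nhdsWithin 0 (Set.Ioi 0)) (nhds (sSup (F '' Ioo 0 τ))) :=
    AntitoneOn.tendsto_nhdsWithin_Ioo_right hne hAnti hBdd
  refine ⟨sSup (F '' Ioo 0 τ), ?_, ?_⟩
  · -- difference quotient tends to L
    have htail : Tendsto (fun t : ℝ => α * t / 2 * (dist p (γ τ) / τ) ^ 2)
        (nhdsWithin 0 (Set.Ioi 0)) (nhds 0) := by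
      have : Tendsto (fun t : ℝ => α * t / 2 * (dist p (γ τ) / τ) ^ 2) (nhds 0)
          (nhds (α * 0 / 2 * (dist p (γ τ) / τ) ^ 2)) := by
        exact (((continuous_const.mul continuous_id).div_const 2).mul continuous_const).tendsto 0
      simpa using this.mono_left nhdsWithin_le_nhds
    have := hT.add htail
    simp only [add_zero] at this
    convert this using 2 with t
    rw [hF]; ring
  · constructor
    · rintro x ⟨t, ht, rfl⟩
      have hmin : min t (τ / 2) ∈ Ioo (0:ℝ) τ :=
        ⟨lt_min ht.1 (by linarith), lt_of_le_of_lt (min_le_right _ _) (by linarith)⟩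
      have h1 : F t ≤ F (min t (τ / 2)) :=
        hanti (min t (τ / 2)) ⟨hmin.1, hmin.2.le⟩ t ht (min_le_left _ _)
      exact h1.trans (le_csSup hBdd ⟨min t (τ / 2), hmin, rfl⟩)
    · intro b hb
      refine csSup_le (hne.image F) ?_
      rintro x ⟨t, ht, rfl⟩
      exact hb ⟨t, ⟨ht.1, ht.2.le⟩, rfl⟩
end

section
/- Let (Ω,d) be a metric space with d(p,q) ≤ π for all p,q ∈ Ω. Let (pₙ) be a sequence in Ω and (sₙ) a sequence of nonnegative real numbers. Then the sequence of pairs (pₙ,sₙ) is Cauchy for the cone distance D (i.e., for every ε > 0 there exists N such that D((pₙ,sₙ),(p_m,s_m)) < ε for all m,n ≥ N) if and only if either sₙ → 0, or there exists s > 0 such that sₙ → s and (pₙ) is a Cauchy sequence in Ω. -/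
open Filter Real

set_option maxHeartbeats 1000000 in
/-- In a metric space of diameter at most `π`, a sequence `(pₙ, sₙ)` in
`Ω × ℝ₊` is Cauchy for the cone distance
`D((p,s),(q,t)) = √(s² + t² − 2 s t cos d(p,q))` if and only if `sₙ → 0`, or `sₙ → s` for
some `s > 0` and `(pₙ)` is Cauchy in `Ω`. -/
theorem cone_cauchy_iff
    {Ω : Type*} [MetricSpace Ω] (hdiam : ∀ p q : Ω, dist p q ≤ π)
    (p : ℕ → Ω) (s : ℕ → ℝ) (hs : ∀ n, 0 ≤ s n) :
    (∀ ε > (0:ℝ), ∃ N : ℕ, ∀ m ≥ N, ∀ n ≥ N,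
        Real.sqrt ((s n) ^ 2 + (s m) ^ 2
          - 2 * s n * s m * Real.cos (dist (p n) (p m))) < ε) ↔
      (Tendsto s atTop (nhds 0) ∨
        ∃ l > (0:ℝ), Tendsto s atTop (nhds l) ∧ CauchySeq p) := by
  have hQ0 : ∀ m n : ℕ, (s n - s m) ^ 2 ≤ (s n) ^ 2 + (s m) ^ 2
      - 2 * s n * s m * Real.cos (dist (p n) (p m)) := by
    intro m n
    nlinarith [Real.cos_le_one (dist (p n) (p m)), hs n, hs m,
      mul_nonneg (hs n) (hs m)]
  constructor
  · intro h
    -- `s` is Cauchy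
    have hscauchy : CauchySeq s := by
      rw [Metric.cauchySeq_iff]
      intro ε hε
      obtain ⟨N, hN⟩ := h ε hε
      refine ⟨N, fun m hm n hn => ?_⟩
      have h1 := hN m hm n hn
      have h2 : |s m - s n| ≤ Real.sqrt ((s n) ^ 2 + (s m) ^ 2
          - 2 * s n * s m * Real.cos (dist (p n) (p m))) := by
        rw [← Real.sqrt_sq_eq_abs]
        apply Real.sqrt_le_sqrt
        nlinarith [hQ0 m n]
      rw [Real.dist_eq]
      linarith
    obtain ⟨l, hl⟩ := cauchySeq_tendsto_of_complete hscauchy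
    have hl0 : 0 ≤ l := ge_of_tendsto' hl hs
    rcases eq_or_lt_of_le hl0 with h0 | hpos
    · exact Or.inl (h0 ▸ hl)
    · refine Or.inr ⟨l, hpos, hl, ?_⟩
      rw [Metric.cauchySeq_iff]
      intro ε hε
      have hπ := Real.pi_pos
      have hππ : (0:ℝ) < π ^ 2 := by positivity
      obtain ⟨N₁, hN₁⟩ := (Filter.eventually_atTop).mp
        (hl.eventually (lt_mem_nhds (show l / 2 < l by linarith)))
      have hε' : 0 < l * ε / π := by positivity
      obtain ⟨N₂, hN₂⟩ := h (l * ε / π) hε'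
      refine ⟨max N₁ N₂, fun m hm n hn => ?_⟩
      have hm1 := hN₁ m (le_trans (le_max_left _ _) hm)
      have hn1 := hN₁ n (le_trans (le_max_left _ _) hn)
      have hD := hN₂ m (le_trans (le_max_right _ _) hm) n (le_trans (le_max_right _ _) hn)
      set d := dist (p n) (p m) with hd
      have hdnn : 0 ≤ d := dist_nonneg
      have hdπ : |d| ≤ π := by rw [abs_of_nonneg hdnn]; exact hdiam _ _
      have hcos := Real.cos_le_one_sub_mul_cos_sq hdπ
      have hQlt : (s n) ^ 2 + (s m) ^ 2 - 2 * s n * s m * Real.cos d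
          < (l * ε / π) ^ 2 := (Real.sqrt_lt' hε').mp hD
      -- turn `hcos` into a division-free form
      have hcos2 : π ^ 2 * Real.cos d ≤ π ^ 2 - 2 * d ^ 2 := by
        have h1 := mul_le_mul_of_nonneg_left hcos hππ.le
        have h2 : π ^ 2 * (1 - 2 / π ^ 2 * d ^ 2) = π ^ 2 - 2 * d ^ 2 := by
          field_simp
        linarith
      have hsnsm : l ^ 2 / 4 ≤ s n * s m := by nlinarith
      have key : l ^ 2 * d ^ 2 ≤ π ^ 2 * ((s n) ^ 2 + (s m) ^ 2
          - 2 * s n * s m * Real.cos d) := by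
        have hA := mul_le_mul_of_nonneg_left hcos2
          (by nlinarith [mul_nonneg (hs n) (hs m)] : (0:ℝ) ≤ 2 * s n * s m)
        have hB := mul_le_mul_of_nonneg_right hsnsm (sq_nonneg d)
        have hC := mul_nonneg hππ.le (sq_nonneg (s n - s m))
        nlinarith [hA, hB, hC]
      have h1 : l ^ 2 * d ^ 2 < l ^ 2 * ε ^ 2 := by
        have e : π ^ 2 * (l * ε / π) ^ 2 = l ^ 2 * ε ^ 2 := by
          field_simp
        have h2 := mul_lt_mul_of_pos_left hQlt hππ
        linarith
      have hd2 : d ^ 2 < ε ^ 2 := lt_of_mul_lt_mul_left h1 (sq_nonneg l)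
      have hcomm : dist (p m) (p n) = d := dist_comm _ _
      rw [hcomm]
      nlinarith [hd2, hdnn, hε]
  · rintro (h0 | ⟨l, hlpos, hl, hp⟩)
    · intro ε hε
      obtain ⟨N, hN⟩ := (Filter.eventually_atTop).mp
        (h0.eventually (gt_mem_nhds (show (0:ℝ) < ε / 2 by linarith)))
      refine ⟨N, fun m hm n hn => ?_⟩
      rw [Real.sqrt_lt' hε]
      have hA := mul_le_mul_of_nonneg_left (Real.neg_one_le_cos (dist (p n) (p m)))
        (by nlinarith [mul_nonneg (hs n) (hs m)] : (0:ℝ) ≤ 2 * s n * s m)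
      have hB : (s n) ^ 2 + (s m) ^ 2 - 2 * s n * s m * Real.cos (dist (p n) (p m))
          ≤ (s n + s m) ^ 2 := by nlinarith [hA]
      have hC : (s n + s m) ^ 2 < ε ^ 2 := by
        nlinarith [hs n, hs m, hN m hm, hN n hn]
      linarith
    · intro ε hε
      have hl1 : (0:ℝ) < l + 1 := by linarith
      set a : ℝ := ε / (2 * (l + 1)) with ha_def
      have ha : 0 < a := by positivity
      obtain ⟨N₀, hN₀⟩ := (Filter.eventually_atTop).mp
        (hl.eventually (gt_mem_nhds (show l < l + 1 by linarith)))
      obtain ⟨N₁, hN₁⟩ := Metric.cauchySeq_iff.mp hl.cauchySeq (ε / 2) (by linarith)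
      obtain ⟨N₂, hN₂⟩ := Metric.cauchySeq_iff.mp hp a ha
      refine ⟨max (max N₀ N₁) N₂, fun m hm n hn => ?_⟩
      have hm0 := hN₀ m (le_trans (le_trans (le_max_left _ _) (le_max_left _ _)) hm)
      have hn0 := hN₀ n (le_trans (le_trans (le_max_left _ _) (le_max_left _ _)) hn)
      have hs1 := hN₁ m (le_trans (le_trans (le_max_right _ _) (le_max_left _ _)) hm)
        n (le_trans (le_trans (le_max_right _ _) (le_max_left _ _)) hn)
      have hp1 := hN₂ n (le_trans (le_max_right _ _) hn) m (le_trans (le_max_right _ _) hm)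
      rw [Real.dist_eq, abs_lt] at hs1
      set d := dist (p n) (p m) with hd
      have hdnn : 0 ≤ d := dist_nonneg
      have hcos := Real.one_sub_sq_div_two_le_cos (x := d)
      rw [Real.sqrt_lt' hε]
      have h2sm : (0:ℝ) ≤ s n * s m := mul_nonneg (hs n) (hs m)
      have hsub : (s n - s m) ^ 2 < ε ^ 2 / 4 := by nlinarith [hs1.1, hs1.2]
      have haε : (l + 1) ^ 2 * a ^ 2 = ε ^ 2 / 4 := by
        rw [ha_def]; field_simp; ring
      have hprod : s n * s m * d ^ 2 < ε ^ 2 / 4 := by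
        have h1 : s n * s m ≤ (l + 1) ^ 2 := by nlinarith [hm0, hn0, hs n, hs m]
        have h2 : d ^ 2 < a ^ 2 := by nlinarith [hp1, hdnn, ha]
        calc s n * s m * d ^ 2 ≤ (l + 1) ^ 2 * d ^ 2 :=
              mul_le_mul_of_nonneg_right h1 (sq_nonneg d)
          _ < (l + 1) ^ 2 * a ^ 2 := by
              exact mul_lt_mul_of_pos_left h2 (pow_pos hl1 2)
          _ = ε ^ 2 / 4 := haε
      have hcosmul : 2 * s n * s m * (1 - Real.cos d) ≤ s n * s m * d ^ 2 := by
        have := mul_le_mul_of_nonneg_left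
          (show 1 - Real.cos d ≤ d ^ 2 / 2 by linarith)
          (by nlinarith [mul_nonneg (hs n) (hs m)] : (0:ℝ) ≤ 2 * s n * s m)
        nlinarith [this]
      nlinarith [hsub, hprod, hcosmul, pow_pos hε 2]
end

section
/- Let (M,d) be a geodesic metric space, p ∈ M, ε > 0, and A ⊆ C([0,1],M) a nonempty set of continuous paths, where C([0,1],M) carries the supremum metric d_∞. Then the set of all x ∈ M for which there exists a rectifiable continuous path σ:[0,1]→M with σ(0) = p, σ(1) = x, and inf_{γ∈A} d_∞(σ,γ) < ε, is an open subset of M. -/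
open Set

/-- Let `M` be a geodesic metric space, `p ∈ M`, `ε > 0`, and
`A ⊆ C([0,1],M)` a nonempty set of paths (sup metric). Then the set of points `x ∈ M`
admitting a rectifiable continuous path `σ : [0,1] → M` from `p` to `x` with
`inf_{γ ∈ A} d_∞(σ,γ) < ε` is open in `M`. Rectifiability is expressed as finiteness of
the total variation (= length) of `σ`. -/
theorem nearby_rectifiable_endpoints_isOpen
    {M : Type*} [MetricSpace M]
    (hgeo : ∀ x y : M, ∃ γ : C(Set.Icc (0:ℝ) 1, M),
      γ ⟨0, by norm_num⟩ = x ∧ γ ⟨1, by norm_num⟩ = y ∧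
        ∀ s t : Set.Icc (0:ℝ) 1, dist (γ s) (γ t) = |(s:ℝ) - (t:ℝ)| * dist x y)
    (p : M) (ε : ℝ) (hε : 0 < ε)
    (A : Set C(Set.Icc (0:ℝ) 1, M)) (hA : A.Nonempty) :
    IsOpen {x : M | ∃ σ : C(Set.Icc (0:ℝ) 1, M),
      eVariationOn (fun t => σ t) Set.univ ≠ ⊤ ∧
      σ ⟨0, by norm_num⟩ = p ∧ σ ⟨1, by norm_num⟩ = x ∧
      sInf ((fun γ : C(Set.Icc (0:ℝ) 1, M) => dist σ γ) '' A) < ε} := by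
  rw [Metric.isOpen_iff]
  rintro x ⟨σ, hfin, h0, h1, hinf⟩
  -- extract a path γ ∈ A with dist σ γ < ε
  obtain ⟨d, ⟨γ, hγA, rfl⟩, hdε⟩ :=
    exists_lt_of_csInf_lt (hA.image (fun γ => dist σ γ)) hinf
  set ε' : ℝ := (ε - dist σ γ) / 5 with hε'def
  have hε' : 0 < ε' := by
    have : 0 < ε - dist σ γ := sub_pos.2 hdε
    positivity
  -- continuity of σ at 1
  obtain ⟨δ, hδ0, hδ⟩ := Metric.continuousAt_iff.mp
    (σ.continuous.continuousAt (x := ⟨1, by norm_num⟩)) ε' hε'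
  set a : ℝ := max (1 - δ/2) (1/2) with hadef
  have ha0 : (0:ℝ) ≤ a := le_trans (by norm_num) (le_max_right _ _)
  have ha1 : a < 1 := by
    apply max_lt <;> [linarith; norm_num]
  have haI : a ∈ Set.Icc (0:ℝ) 1 := ⟨ha0, ha1.le⟩
  have hkey : ∀ t : Set.Icc (0:ℝ) 1, a ≤ (t:ℝ) → dist (σ t) x < ε' := by
    intro t ht
    have h1a : 1 - a ≤ δ/2 := by
      have := le_max_left (1 - δ/2) (1/2); simp only [← hadef] at this; linarith
    have hd : dist t (⟨1, by norm_num⟩ : Set.Icc (0:ℝ) 1) < δ := by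
      rw [Subtype.dist_eq, Real.dist_eq, abs_of_nonpos (by simpa using t.2.2)]
      have := t.2.2
      simp only
      linarith
    have := hδ hd
    rwa [h1] at this
  refine ⟨ε', hε', fun y hy => ?_⟩
  rw [Metric.mem_ball] at hy
  have hxy : dist x y < ε' := by rwa [dist_comm] at hy
  set aa : Set.Icc (0:ℝ) 1 := ⟨a, haI⟩ with haadef
  -- geodesic from σ aa to y
  obtain ⟨g, hg0, hg1, hgd⟩ := hgeo (σ aa) y
  set D : ℝ := dist (σ aa) y with hDdef
  have hD0 : 0 ≤ D := dist_nonneg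
  have hDlt : D < 2 * ε' := by
    calc D ≤ dist (σ aa) x + dist x y := dist_triangle _ _ _
    _ < ε' + ε' := add_lt_add (hkey aa le_rfl) hxy
    _ = 2 * ε' := by ring
  -- parts of the new path as maps ℝ → M
  set fouter : ℝ → M := fun r => g (projIcc 0 1 zero_le_one r) with hfo
  set ginner : Set.Icc (0:ℝ) 1 → ℝ := fun t => ((t:ℝ) - a) / (1 - a) with hgi
  have hglip : LipschitzWith D.toNNReal g := by
    apply LipschitzWith.of_dist_le_mul
    intro s t
    rw [hgd s t, Subtype.dist_eq, Real.dist_eq]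
    exact le_of_eq (by rw [Real.coe_toNNReal D hD0, mul_comm])
  have hfolip : LipschitzWith D.toNNReal fouter := by
    have := hglip.comp (LipschitzWith.projIcc (a := (0:ℝ)) (b := 1) zero_le_one)
    rw [mul_one] at this
    exact this
  -- the new path as a function on ℝ
  set F : ℝ → M := fun r => if r ≤ a then σ (projIcc 0 1 zero_le_one r)
      else fouter ((r - a) / (1 - a)) with hF
  have hFc : Continuous F := by
    apply Continuous.if_le
    · exact σ.continuous.comp (continuous_projIcc)
    · exact hfolip.continuous.comp (by fun_prop)
    · exact continuous_id
    · exact continuous_const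
    · intro r hr
      subst hr
      simp only [hfo]
      rw [projIcc_of_mem zero_le_one haI, sub_self, zero_div, projIcc_left, hg0]
  set τ : C(Set.Icc (0:ℝ) 1, M) := ⟨fun t => F t, hFc.comp continuous_subtype_val⟩ with hτ
  have hτeq1 : ∀ t : Set.Icc (0:ℝ) 1, (t:ℝ) ≤ a → τ t = σ t := by
    intro t ht
    simp only [hτ, ContinuousMap.coe_mk, hF, if_pos ht, projIcc_of_mem zero_le_one t.2]
  have hτeq2 : ∀ t : Set.Icc (0:ℝ) 1, a < (t:ℝ) → τ t = fouter (ginner t) := by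
    intro t ht
    simp only [hτ, ContinuousMap.coe_mk, hF, if_neg (not_le.2 ht), hgi]
  -- endpoint values
  have hτ0 : τ ⟨0, by norm_num⟩ = p := by
    rw [hτeq1 _ (by simpa using ha0), h0]
  have hτ1 : τ ⟨1, by norm_num⟩ = y := by
    have : ¬ ((1:ℝ) ≤ a) := not_le.2 ha1
    simp only [hτ, ContinuousMap.coe_mk, hF, if_neg this, hfo]
    rw [div_self (by linarith : (1:ℝ) - a ≠ 0), projIcc_right, hg1]
  -- distance bound : pointwise dist (τ t) (σ t) ≤ 4 ε'
  have hdistpt : ∀ t : Set.Icc (0:ℝ) 1, dist (τ t) (σ t) ≤ 4 * ε' := by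
    intro t
    rcases le_or_gt (t:ℝ) a with ht | ht
    · rw [hτeq1 t ht, dist_self]; positivity
    · rw [hτeq2 t ht]
      have hproj : dist (fouter (ginner t)) (σ aa) ≤ D := by
        simp only [hfo]
        rw [← hg0]
        have := hgd (projIcc 0 1 zero_le_one (ginner t)) ⟨0, by norm_num⟩
        rw [this]
        have hm := (projIcc 0 1 zero_le_one (ginner t)).2
        calc |(projIcc 0 1 zero_le_one (ginner t) : ℝ) - (0:ℝ)| * D ≤ 1 * D := by
              apply mul_le_mul_of_nonneg_right _ hD0
              rw [sub_zero, abs_of_nonneg hm.1]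
              exact hm.2
          _ = D := one_mul D
      calc dist (fouter (ginner t)) (σ t)
          ≤ dist (fouter (ginner t)) (σ aa) + dist (σ aa) x + dist x (σ t) :=
            dist_triangle4 _ _ _ _
        _ ≤ D + ε' + ε' := by
            have h2 := hkey aa le_rfl
            have h3 := hkey t ht.le
            rw [dist_comm x (σ t)]
            exact add_le_add (add_le_add hproj h2.le) h3.le
        _ ≤ 4 * ε' := by linarith
  have hτσ : dist τ σ ≤ 4 * ε' := by
    rw [ContinuousMap.dist_le (by positivity)]
    exact hdistpt
  have hτγ : dist τ γ < ε := by
    calc dist τ γ ≤ dist τ σ + dist σ γ := dist_triangle _ _ _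
      _ ≤ 4 * ε' + dist σ γ := by linarith
      _ < ε := by rw [hε'def]; linarith
  -- bounded variation
  have hvar : eVariationOn (fun t => τ t) Set.univ ≠ ⊤ := by
    have hsplit : (Set.univ : Set (Set.Icc (0:ℝ) 1)) = Set.Iic aa ∪ Set.Ici aa :=
      (Set.Iic_union_Ici).symm
    rw [hsplit, eVariationOn.union _ isGreatest_Iic isLeast_Ici]
    rw [ENNReal.add_ne_top]
    constructor
    · have heq : eVariationOn (fun t => τ t) (Set.Iic aa) =
          eVariationOn (fun t => σ t) (Set.Iic aa) :=
        eVariationOn.eq_of_eqOn (fun t ht => hτeq1 t (show (t:ℝ) ≤ (aa:ℝ) from Subtype.coe_le_coe.2 ht))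
      rw [heq]
      exact ne_top_of_le_ne_top hfin (eVariationOn.mono _ (Set.subset_univ _))
    · have heq : eVariationOn (fun t => τ t) (Set.Ici aa) =
          eVariationOn (fouter ∘ ginner) (Set.Ici aa) := by
        apply eVariationOn.eq_of_eqOn
        intro t ht
        rcases eq_or_lt_of_le (Subtype.coe_le_coe.2 ht : (aa:ℝ) ≤ (t:ℝ)) with heq | hlt
        · have hta : t = aa := Subtype.ext heq.symm
          show τ t = (fouter ∘ ginner) t
          rw [hta, hτeq1 aa le_rfl]
          have haa : (aa:ℝ) = a := rfl
          simp only [Function.comp, hgi, hfo, haa, sub_self, zero_div, projIcc_left, hg0]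
        · exact hτeq2 t hlt
      rw [heq]
      have hle := hfolip.lipschitzOnWith (s := Set.univ) |>.comp_eVariationOn_le
        (g := ginner) (s := Set.Ici aa) (Set.mapsTo_univ _ _)
      apply ne_top_of_le_ne_top _ hle
      apply ENNReal.mul_ne_top ENNReal.coe_ne_top
      -- variation of the monotone real function ginner is finite
      have hmono : MonotoneOn ginner (Set.Ici aa) := by
        intro s _ t _ hst
        simp only [hgi]
        have hst' : (s:ℝ) ≤ (t:ℝ) := Subtype.coe_le_coe.2 hst
        exact (div_le_div_iff_of_pos_right (by linarith : (0:ℝ) < 1 - a)).2 (by linarith)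
      have hIcc : Set.Ici aa = Set.Ici aa ∩ Set.Icc aa ⟨1, by norm_num⟩ := by
        ext t
        simp only [Set.mem_inter_iff, Set.mem_Ici, Set.mem_Icc, iff_self_and, and_imp]
        intro h
        exact ⟨h, Subtype.coe_le_coe.mp t.2.2⟩
      rw [hIcc]
      exact ne_top_of_le_ne_top ENNReal.ofReal_ne_top
        (hmono.eVariationOn_le Set.self_mem_Ici (show aa ≤ (⟨1, by norm_num⟩ : Set.Icc (0:ℝ) 1) from Subtype.coe_le_coe.mp (show (aa:ℝ) ≤ ((⟨1, by norm_num⟩ : Set.Icc (0:ℝ) 1) : ℝ) from ha1.le)))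
  -- conclude
  refine ⟨τ, hvar, hτ0, hτ1, ?_⟩
  calc sInf ((fun γ' => dist τ γ') '' A) ≤ dist τ γ :=
        csInf_le ⟨0, fun r ⟨γ', _, hr⟩ => hr ▸ dist_nonneg⟩ ⟨γ, hγA, rfl⟩
    _ < ε := hτγ
end
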